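/- arXiv:1806.10563 — 2 statements merged into one kernel-verified Lean document; each statement's English description precedes it below -/
import Mathlib

section
/- The formula ⟨x,y⟩ := (x,y) − J^{-1}·𝐣·(L(x), y) ∈ B defines a B-skew-hermitian form on the right B-module Ṽ: it is additive in each variable, satisfies ⟨x·b, y·b'⟩ = b^*·⟨x,y⟩·b' for all b, b' ∈ B, and ⟨y,x⟩ = −⟨x,y⟩^*, where b ↦ b^* is the main involution of B; moreover its E-component is the skew-hermitian form (·,·). -/
/-- The canonical generator `v₁ ∧ ⋯ ∧ vₙ` of the `n`-th exterior power, as an element of the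
submodule `⋀[E]^n V` of the exterior algebra. -/
noncomputable def wedgeι (E : Type*) [CommRing E] {V : Type*} [AddCommGroup V] [Module E V]
    (n : ℕ) (v : Fin n → V) : ⋀[E]^n V :=
  ⟨ExteriorAlgebra.ιMulti E n v, ExteriorAlgebra.ιMulti_range E n (Set.mem_range_self v)⟩

/-- The wedge (exterior) product `⋀²V × ⋀²V → ⋀⁴V`. -/
noncomputable def wedgeMul (E : Type*) [CommRing E] {V : Type*} [AddCommGroup V] [Module E V]
    (x y : ⋀[E]^2 V) : ⋀[E]^4 V :=
  ⟨(x : ExteriorAlgebra E V) * (y : ExteriorAlgebra E V), by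
    have h := Submodule.mul_mem_mul x.2 y.2
    have e : (⋀[E]^2 V) * (⋀[E]^2 V) = ⋀[E]^4 V := by
      show LinearMap.range (ExteriorAlgebra.ι E (M := V)) ^ 2 *
          LinearMap.range (ExteriorAlgebra.ι E (M := V)) ^ 2
        = LinearMap.range (ExteriorAlgebra.ι E (M := V)) ^ 4
      rw [← pow_add]
    exact e ▸ h⟩

/-- `h` is a form on `⋀^r V`, additive in each variable, `ρ`-sesquilinear, conjugate-symmetric,
whose value on decomposable wedges is the determinant `det (H (v i) (w j))`. -/
def IsDetForm {E : Type*} [Field E] (ρ : E →+* E)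
    {V : Type*} [AddCommGroup V] [Module E V] (H : V → V → E) (r : ℕ)
    (h : (⋀[E]^r V) → (⋀[E]^r V) → E) : Prop :=
  (∀ x y z, h (x + y) z = h x z + h y z) ∧
  (∀ x y z, h x (y + z) = h x y + h x z) ∧
  (∀ (a b : E) (x y : ⋀[E]^r V), h (a • x) (b • y) = ρ a * h x y * b) ∧
  (∀ x y, h x y = ρ (h y x)) ∧
  (∀ v w : Fin r → V,
    h (wedgeι E r v) (wedgeι E r w) = (Matrix.of fun i j => H (v i) (w j)).det)


/-- The quaternion algebra `B = E ⊕ E𝐣` (elements written `a + b·𝐣`) attached to the quadratic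
extension `E` with conjugation `ρ` and to `J = 𝐣² ∈ E`; multiplication is determined by
`𝐣² = J` and `α·𝐣 = 𝐣·ρ(α)`. -/
def Qa {E : Type*} [Field E] (ρ : E →+* E) (J : E) : Type _ := E × E

namespace Qa

variable {E : Type*} [Field E] {ρ : E →+* E} {J : E}

instance : AddCommGroup (Qa ρ J) := inferInstanceAs (AddCommGroup (E × E))
instance : Module E (Qa ρ J) := inferInstanceAs (Module E (E × E))

/-- The element `a + b·𝐣` of `B`. -/
def mk' (ρ : E →+* E) (J : E) (a b : E) : Qa ρ J := (a, b)

/-- The `E`-component of `a + b·𝐣`. -/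
def re (x : Qa ρ J) : E := Prod.fst x

/-- The `𝐣`-coefficient of `a + b·𝐣`. -/
def im (x : Qa ρ J) : E := Prod.snd x

instance : One (Qa ρ J) := ⟨mk' ρ J 1 0⟩

/-- Multiplication: `(a + b𝐣)(c + d𝐣) = (ac + J·b·ρ(d)) + (ad + b·ρ(c))·𝐣`. -/
instance : Mul (Qa ρ J) :=
  ⟨fun x y => mk' ρ J (re x * re y + J * (im x * ρ (im y))) (re x * im y + im x * ρ (re y))⟩

/-- The main involution `(a + b𝐣)^* = ρ(a) - b𝐣` of `B`. -/
def conj (x : Qa ρ J) : Qa ρ J := mk' ρ J (ρ (re x)) (-im x)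

/-- The embedding `E → B`. -/
def scalar (ρ : E →+* E) (J : E) (c : E) : Qa ρ J := mk' ρ J c 0

/-- The element `𝐣 ∈ B`. -/
def jay (ρ : E →+* E) (J : E) : Qa ρ J := mk' ρ J 0 1

end Qa


/-- The right action of `B = E ⊕ E𝐣` on `Ṽ = ⋀²V`, where `E` acts by scalars and `x·𝐣 = L(x)`
(so `x·(a + b𝐣) = a•x + ρ(b)•L(x)`). -/
def actB {E : Type*} [Field E] (ρ : E →+* E) (J : E) {M : Type*} [AddCommGroup M] [Module E M]
    (L : M → M) (x : M) (q : Qa ρ J) : M :=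
  Qa.re q • x + ρ (Qa.im q) • L x

/-- The `B`-valued form `⟨x,y⟩ = (x,y) - J⁻¹·𝐣·(L(x),y)` on `Ṽ`, where `(x,y) = 𝐢·h₂(x,y)`. -/
noncomputable def qform {E : Type*} [Field E] (ρ : E →+* E) (J : E) (i0 : E)
    {M : Type*} [AddCommGroup M] [Module E M] (h₂ : M → M → E) (L : M → M)
    (x y : M) : Qa ρ J :=
  Qa.scalar ρ J (i0 * h₂ x y) -
    Qa.scalar ρ J J⁻¹ * Qa.jay ρ J * Qa.scalar ρ J (i0 * h₂ (L x) y)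

section Aux

variable {E : Type*} [Field E] {ρ : E →+* E} {J : E}

theorem Qa.ext' {x y : Qa ρ J} (h1 : Qa.re x = Qa.re y) (h2 : Qa.im x = Qa.im y) : x = y :=
  Prod.ext h1 h2

theorem Qa.re_mk'' (a b : E) : Qa.re (Qa.mk' ρ J a b) = a := rfl
theorem Qa.im_mk'' (a b : E) : Qa.im (Qa.mk' ρ J a b) = b := rfl

theorem Qa.re_mul' (x y : Qa ρ J) :
    Qa.re (x * y) = Qa.re x * Qa.re y + J * (Qa.im x * ρ (Qa.im y)) := rfl

theorem Qa.im_mul' (x y : Qa ρ J) :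
    Qa.im (x * y) = Qa.re x * Qa.im y + Qa.im x * ρ (Qa.re y) := rfl

theorem Qa.re_add' (x y : Qa ρ J) : Qa.re (x + y) = Qa.re x + Qa.re y := rfl
theorem Qa.im_add' (x y : Qa ρ J) : Qa.im (x + y) = Qa.im x + Qa.im y := rfl
theorem Qa.re_sub' (x y : Qa ρ J) : Qa.re (x - y) = Qa.re x - Qa.re y := rfl
theorem Qa.im_sub' (x y : Qa ρ J) : Qa.im (x - y) = Qa.im x - Qa.im y := rfl
theorem Qa.re_neg' (x : Qa ρ J) : Qa.re (-x) = -Qa.re x := rfl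
theorem Qa.im_neg' (x : Qa ρ J) : Qa.im (-x) = -Qa.im x := rfl
theorem Qa.re_conj' (x : Qa ρ J) : Qa.re (Qa.conj x) = ρ (Qa.re x) := rfl
theorem Qa.im_conj' (x : Qa ρ J) : Qa.im (Qa.conj x) = -Qa.im x := rfl
theorem Qa.re_scalar' (c : E) : Qa.re (Qa.scalar ρ J c) = c := rfl
theorem Qa.im_scalar' (c : E) : Qa.im (Qa.scalar ρ J c) = 0 := rfl
theorem Qa.re_jay' : Qa.re (Qa.jay ρ J) = 0 := rfl
theorem Qa.im_jay' : Qa.im (Qa.jay ρ J) = 1 := rfl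

end Aux

theorem wedgeMul_comm (E : Type*) [CommRing E] {V : Type*} [AddCommGroup V] [Module E V]
    (x y : ⋀[E]^2 V) : wedgeMul E x y = wedgeMul E y x := by
  apply Subtype.ext
  show (x : ExteriorAlgebra E V) * (y : ExteriorAlgebra E V) = y * x
  have hx : (x : ExteriorAlgebra E V) ∈
      LinearMap.range (ExteriorAlgebra.ι E (M := V)) *
        LinearMap.range (ExteriorAlgebra.ι E (M := V)) := by
    rw [← pow_two]; exact x.2
  have hy : (y : ExteriorAlgebra E V) ∈
      LinearMap.range (ExteriorAlgebra.ι E (M := V)) *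
        LinearMap.range (ExteriorAlgebra.ι E (M := V)) := by
    rw [← pow_two]; exact y.2
  have key : ∀ (s : V) (b : ExteriorAlgebra E V),
      b ∈ LinearMap.range (ExteriorAlgebra.ι E (M := V)) *
        LinearMap.range (ExteriorAlgebra.ι E (M := V)) →
      Commute (ExteriorAlgebra.ι E s) b := by
    intro s b hb
    refine Submodule.mul_induction_on hb ?_ ?_
    · rintro _ ⟨u, rfl⟩ _ ⟨v, rfl⟩
      have h1 : ExteriorAlgebra.ι E s * ExteriorAlgebra.ι E u =
          -(ExteriorAlgebra.ι E u * ExteriorAlgebra.ι E s) := by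
        rw [eq_neg_iff_add_eq_zero]
        exact ExteriorAlgebra.ι_add_mul_swap s u
      have h2 : ExteriorAlgebra.ι E s * ExteriorAlgebra.ι E v =
          -(ExteriorAlgebra.ι E v * ExteriorAlgebra.ι E s) := by
        rw [eq_neg_iff_add_eq_zero]
        exact ExteriorAlgebra.ι_add_mul_swap s v
      show ExteriorAlgebra.ι E s * (ExteriorAlgebra.ι E u * ExteriorAlgebra.ι E v) =
        ExteriorAlgebra.ι E u * ExteriorAlgebra.ι E v * ExteriorAlgebra.ι E s
      rw [← mul_assoc, h1, neg_mul, mul_assoc, h2, mul_neg, neg_neg, ← mul_assoc]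
    · intro a b ha hb
      exact (Commute.add_right ha hb)
  refine Submodule.mul_induction_on hx ?_ ?_
  · rintro _ ⟨u, rfl⟩ _ ⟨v, rfl⟩
    have cu := key u _ hy
    have cv := key v _ hy
    exact (cu.mul_left cv).eq
  · intro a b ha hb
    rw [add_mul, mul_add, ha, hb]

theorem wedgeMul_smul_left (E : Type*) [CommRing E] {V : Type*} [AddCommGroup V] [Module E V]
    (a : E) (x y : ⋀[E]^2 V) : wedgeMul E (a • x) y = a • wedgeMul E x y := by
  apply Subtype.ext
  show ((a • x : ⋀[E]^2 V) : ExteriorAlgebra E V) * y = a • ((x : ExteriorAlgebra E V) * y)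
  rw [Submodule.coe_smul, smul_mul_assoc]

/-- The formula `⟨x,y⟩ = (x,y) - J⁻¹·𝐣·(L(x),y)` defines a `B`-skew-hermitian
form on the right `B`-module `Ṽ = ⋀²V`: it is additive in each variable, satisfies
`⟨x·b, y·b'⟩ = b^*·⟨x,y⟩·b'`, and `⟨y,x⟩ = -⟨x,y⟩^*`; its `E`-component is the skew-hermitian
form `(x,y) = 𝐢·h₂(x,y)`. -/
theorem qform_is_skew_hermitian
    {F E : Type*} [Field F] [CharZero F] [Field E] [Algebra F E]
    (hquad : Module.finrank F E = 2)
    (ρ : E →+* E) (hρ_invol : ∀ a, ρ (ρ a) = a) (hρ_ne : ρ ≠ RingHom.id E)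
    (hρ_fixF : ∀ c : F, ρ (algebraMap F E c) = algebraMap F E c)
    (hρ_fixed_field : ∀ a : E, ρ a = a → ∃ c : F, algebraMap F E c = a)
    {V : Type*} [AddCommGroup V] [Module E V] [FiniteDimensional E V]
    (hV4 : Module.finrank E V = 4)
    (H : V → V → E)
    (H_add_left : ∀ x y z, H (x + y) z = H x z + H y z)
    (H_add_right : ∀ x y z, H x (y + z) = H x y + H x z)
    (H_smul : ∀ (a b : E) (x y : V), H (a • x) (b • y) = ρ a * H x y * b)
    (H_conj : ∀ x y, H x y = ρ (H y x))
    (H_nondeg : ∀ x, (∀ y, H x y = 0) → x = 0)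
    (d : (⋀[E]^4 V) ≃ₗ[E] E)
    (h₂ : (⋀[E]^2 V) → (⋀[E]^2 V) → E) (hh₂ : IsDetForm ρ H 2 h₂)
    (L : (⋀[E]^2 V) → (⋀[E]^2 V))
    (L_add : ∀ x y, L (x + y) = L x + L y)
    (L_smul : ∀ (a : E) (x : ⋀[E]^2 V), L (a • x) = ρ a • L x)
    (L_def : ∀ x y : ⋀[E]^2 V, d (wedgeMul E (L x) y) = h₂ x y)
    (J : F) (hJ0 : J ≠ 0)
    (hLL : ∀ x : ⋀[E]^2 V, L (L x) = algebraMap F E J • x)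
    (i0 : E) (hi0_ne : i0 ≠ 0) (hi0_trace : ρ i0 = -i0) :
    (∀ x x' y : ⋀[E]^2 V,
      qform ρ (algebraMap F E J) i0 h₂ L (x + x') y =
        qform ρ (algebraMap F E J) i0 h₂ L x y +
          qform ρ (algebraMap F E J) i0 h₂ L x' y) ∧
    (∀ x y y' : ⋀[E]^2 V,
      qform ρ (algebraMap F E J) i0 h₂ L x (y + y') =
        qform ρ (algebraMap F E J) i0 h₂ L x y +
          qform ρ (algebraMap F E J) i0 h₂ L x y') ∧
    (∀ (b b' : Qa ρ (algebraMap F E J)) (x y : ⋀[E]^2 V),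
      qform ρ (algebraMap F E J) i0 h₂ L
          (actB ρ (algebraMap F E J) L x b) (actB ρ (algebraMap F E J) L y b') =
        Qa.conj b * qform ρ (algebraMap F E J) i0 h₂ L x y * b') ∧
    (∀ x y : ⋀[E]^2 V,
      qform ρ (algebraMap F E J) i0 h₂ L y x =
        -Qa.conj (qform ρ (algebraMap F E J) i0 h₂ L x y)) ∧
    (∀ x y : ⋀[E]^2 V,
      Qa.re (qform ρ (algebraMap F E J) i0 h₂ L x y) = i0 * h₂ x y) := by
  obtain ⟨h2al, h2ar, h2sm, h2cj, -⟩ := hh₂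
  set Jv := algebraMap F E J with hJvdef
  have hJne : Jv ≠ 0 := fun h => hJ0 ((map_eq_zero_iff _ (algebraMap F E).injective).mp h)
  have hρJ : ρ Jv = Jv := hρ_fixF J
  have hsl : ∀ (a : E) (x y : ⋀[E]^2 V), h₂ (a • x) y = ρ a * h₂ x y := by
    intro a x y
    have := h2sm a 1 x y
    simpa using this
  have hsr : ∀ (a : E) (x y : ⋀[E]^2 V), h₂ x (a • y) = h₂ x y * a := by
    intro a x y
    have := h2sm 1 a x y
    simpa using this
  -- key identities
  have hL2 : ∀ x y : ⋀[E]^2 V, h₂ (L x) y = Jv * d (wedgeMul E x y) := by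
    intro x y
    rw [← L_def (L x) y, hLL x, wedgeMul_smul_left, map_smul, smul_eq_mul]
  have hA5 : ∀ x y : ⋀[E]^2 V, h₂ x (L y) = h₂ y (L x) := by
    intro x y
    rw [h2cj x (L y), h2cj y (L x), hL2, hL2, wedgeMul_comm]
  have hA4 : ∀ x y : ⋀[E]^2 V, h₂ (L x) (L y) = Jv * ρ (h₂ x y) := by
    intro x y
    rw [hL2 x (L y), wedgeMul_comm, L_def y x, h2cj y x]
  have qeq : ∀ x y : ⋀[E]^2 V, qform ρ Jv i0 h₂ L x y =
      Qa.mk' ρ Jv (i0 * h₂ x y) (Jv⁻¹ * (i0 * h₂ y (L x))) := by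
    intro x y
    have key : ρ (i0 * h₂ (L x) y) = -(i0 * h₂ y (L x)) := by
      rw [map_mul, hi0_trace, h2cj (L x) y, hρ_invol]
      ring
    apply Qa.ext'
    · simp only [qform, Qa.re_sub', Qa.re_mul', Qa.im_mul', Qa.re_scalar',
        Qa.im_scalar', Qa.re_jay', Qa.im_jay', Qa.re_mk'', map_zero, map_one,
        mul_zero, zero_mul, mul_one, one_mul, add_zero, zero_add, sub_zero]
    · simp only [qform, Qa.im_sub', Qa.re_mul', Qa.im_mul', Qa.re_scalar',
        Qa.im_scalar', Qa.re_jay', Qa.im_jay', Qa.im_mk'', map_zero, map_one,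
        mul_zero, zero_mul, mul_one, one_mul, add_zero, zero_add, key]
      ring
  refine ⟨?_, ?_, ?_, ?_, ?_⟩
  · intro x x' y
    rw [qeq, qeq, qeq]
    apply Qa.ext'
    · rw [Qa.re_add', Qa.re_mk'', Qa.re_mk'', Qa.re_mk'', h2al]
      ring
    · rw [Qa.im_add', Qa.im_mk'', Qa.im_mk'', Qa.im_mk'', L_add, h2ar]
      ring
  · intro x y y'
    rw [qeq, qeq, qeq]
    apply Qa.ext'
    · rw [Qa.re_add', Qa.re_mk'', Qa.re_mk'', Qa.re_mk'', h2ar]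
      ring
    · rw [Qa.im_add', Qa.im_mk'', Qa.im_mk'', Qa.im_mk'', h2al]
      ring
  · intro b b' x y
    have hX : actB ρ Jv L x b = Qa.re b • x + ρ (Qa.im b) • L x := rfl
    have hY : actB ρ Jv L y b' = Qa.re b' • y + ρ (Qa.im b') • L y := rfl
    have hLX : L (actB ρ Jv L x b) = ρ (Qa.re b) • L x + (Qa.im b * Jv) • x := by
      rw [hX, L_add, L_smul, L_smul, hρ_invol, hLL, smul_smul]
    have e_yx : h₂ y x = ρ (h₂ x y) := h2cj y x
    have e_yLx : h₂ y (L x) = h₂ x (L y) := hA5 y x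
    have e_Lxy : h₂ (L x) y = ρ (h₂ x (L y)) := by rw [h2cj (L x) y, hA5 y x]
    have e_Lyx : h₂ (L y) x = ρ (h₂ x (L y)) := h2cj (L y) x
    have e_LxLy : h₂ (L x) (L y) = Jv * ρ (h₂ x y) := hA4 x y
    have e_LyLx : h₂ (L y) (L x) = Jv * h₂ x y := by
      rw [hA4 y x, e_yx, hρ_invol]
    -- expansions
    have exp1 : h₂ (actB ρ Jv L x b) (actB ρ Jv L y b') =
        ρ (Qa.re b) * h₂ x y * Qa.re b' + ρ (Qa.re b) * h₂ x (L y) * ρ (Qa.im b') +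
          Qa.im b * ρ (h₂ x (L y)) * Qa.re b' +
          Qa.im b * (Jv * ρ (h₂ x y)) * ρ (Qa.im b') := by
      rw [hX, hY, h2al, h2ar, h2ar, h2sm, h2sm, h2sm, h2sm, hρ_invol,
        e_Lxy, e_LxLy]
      ring
    have exp2 : h₂ (actB ρ Jv L y b') (L (actB ρ Jv L x b)) =
        ρ (Qa.re b') * h₂ x (L y) * ρ (Qa.re b) +
          ρ (Qa.re b') * ρ (h₂ x y) * (Qa.im b * Jv) +
          Qa.im b' * (Jv * h₂ x y) * ρ (Qa.re b) +
          Qa.im b' * ρ (h₂ x (L y)) * (Qa.im b * Jv) := by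
      rw [hY, hLX, h2al, h2ar, h2ar, h2sm, h2sm, h2sm, h2sm, hρ_invol,
        e_yLx, e_yx, e_LyLx, e_Lyx]
      ring
    rw [qeq, qeq]
    apply Qa.ext'
    · simp only [Qa.re_mul', Qa.im_mul', Qa.re_conj', Qa.im_conj', Qa.re_mk'',
        Qa.im_mk'', exp1, e_yLx, map_mul, map_neg, map_inv₀, hρJ, hi0_trace, hρ_invol]
      field_simp
      ring
    · simp only [Qa.re_mul', Qa.im_mul', Qa.re_conj', Qa.im_conj', Qa.re_mk'',
        Qa.im_mk'', exp2, e_yLx, map_mul, map_neg, map_inv₀, hρJ, hi0_trace, hρ_invol]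
      field_simp
      ring
  · intro x y
    rw [qeq, qeq]
    apply Qa.ext'
    · rw [Qa.re_neg', Qa.re_conj', Qa.re_mk'', Qa.re_mk'', map_mul, hi0_trace,
        h2cj y x]
      ring
    · rw [Qa.im_neg', Qa.im_conj', Qa.im_mk'', Qa.im_mk'', hA5 x y]
      ring
  · intro x y
    rw [qeq, Qa.re_mk'']
end

section
/- For every g ∈ GU(V,H) with similitude factor ν(g), one has L ∘ ⋀²g = (ν(g)²·(det g)^{-1}) · (⋀²g ∘ L) as maps ⋀²V → ⋀²V; that is, L((⋀²g)(x)) = (ν(g)²/det g)·(⋀²g)(L(x)) for all x ∈ ⋀²V. -/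
open Module

namespace AlternatingMap

variable {R M N ι : Type*} [CommRing R] [AddCommGroup M] [Module R M] [AddCommGroup N]
  [Module R N] [Fintype ι] [DecidableEq ι]

theorem apply_eq_basis_det_smul (e : Basis ι R M) (f : M [⋀^ι]→ₗ[R] N) (v : ι → M) :
    f v = e.det v • f e := by
  suffices f = (LinearMap.toSpanSingleton R N (f e)).compAlternatingMap e.det from
    congr($this v)
  refine e.ext_alternating fun i hi => ?_
  let σ : Equiv.Perm ι := Equiv.ofBijective i (Finite.injective_iff_bijective.1 hi)
  change f (e ∘ σ) = LinearMap.toSpanSingleton R N (f e) (e.det (e ∘ σ))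
  simp [AlternatingMap.map_perm, e.det_self, Units.smul_def, Int.cast_smul_eq_zsmul]

theorem apply_comp_eq_det_smul (e : Basis ι R M) (f : M [⋀^ι]→ₗ[R] N) (φ : M →ₗ[R] M)
    (v : ι → M) : f (φ ∘ v) = LinearMap.det φ • f v := by
  rw [apply_eq_basis_det_smul e f, apply_eq_basis_det_smul e f v, e.det_comp, mul_smul]

end AlternatingMap

theorem ExteriorAlgebra.map_eq_det_smul_of_mem_exteriorPower {R M : Type*} [CommRing R]
    [AddCommGroup M] [Module R M] {n : ℕ} (b : Basis (Fin n) R M) (f : M →ₗ[R] M)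
    {z : ExteriorAlgebra R M} (hz : z ∈ ⋀[R]^n M) :
    ExteriorAlgebra.map f z = LinearMap.det f • z := by
  rw [← ExteriorAlgebra.ιMulti_span_fixedDegree] at hz
  induction hz using Submodule.span_induction with
  | mem _ hy =>
    obtain ⟨v, rfl⟩ := hy
    rw [ExteriorAlgebra.map_apply_ιMulti]
    exact AlternatingMap.apply_comp_eq_det_smul b _ f v
  | zero => simp
  | add _ _ _ _ hx hy => rw [map_add, hx, hy, smul_add]
  | smul a _ _ hx => rw [map_smul, hx, smul_comm]

namespace exteriorPower

variable {R M N : Type*} [CommRing R] [AddCommGroup M] [Module R M] [AddCommGroup N]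
  [Module R N] {n : ℕ}

@[elab_as_elim]
theorem induction_on {p : ⋀[R]^n M → Prop} (x : ⋀[R]^n M)
    (ιMulti : ∀ v, p (ιMulti R n v)) (add : ∀ x y, p x → p y → p (x + y))
    (smul : ∀ (a : R) x, p x → p (a • x)) : p x := by
  have hx : x ∈ Submodule.span R (Set.range (exteriorPower.ιMulti R n (M := M))) := by
    rw [ιMulti_span]; trivial
  induction hx using Submodule.span_induction with
  | mem _ hy => obtain ⟨v, rfl⟩ := hy; exact ιMulti v
  | zero => simpa using smul 0 _ (ιMulti 0)
  | add _ _ _ _ hx hy => exact add _ _ hx hy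
  | smul a _ _ hx => exact smul a _ hx

theorem coe_map (f : M →ₗ[R] N) (x : ⋀[R]^n M) :
    (map n f x : ExteriorAlgebra R N) = ExteriorAlgebra.map f x := by
  have : (⋀[R]^n N).subtype ∘ₗ map n f
      = (ExteriorAlgebra.map f).toLinearMap ∘ₗ (⋀[R]^n M).subtype := by
    ext v
    simp [map_apply_ιMulti, ExteriorAlgebra.map_apply_ιMulti]
  exact congr($this x)

open Set.powersetCard in
theorem eq_zero_of_forall_mul_eq_zero {I : Type*} [LinearOrder I] [Fintype I]
    (b : Basis I R M) {m : ℕ} (hmn : n + m = Fintype.card I) {z : ⋀[R]^m M}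
    (hz : ∀ y : ⋀[R]^n M, (z : ExteriorAlgebra R M) * y = 0) : z = 0 := by
  classical
  refine (b.exteriorPower m).ext_elem fun s => ?_
  rw [map_zero, Finsupp.zero_apply]
  -- The basis vector indexed by the complement `t` of `s` kills every other basis vector of `z`.
  let t : Set.powersetCard I n := compl hmn s
  have eq_of_disjoint (s' : Set.powersetCard I m) (h : Disjoint s'.val t.val) : s' = s :=
    Subtype.ext <| Finset.eq_of_subset_of_card_le
      (disjoint_compl_right_iff.mp (by simpa [t] using h)) (by simp [card_eq])
  have key := hz (b.exteriorPower n t)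
  rw [← (b.exteriorPower m).sum_repr z, Submodule.coe_sum, Finset.sum_mul,
    Finset.sum_eq_single s] at key
  · rw [Submodule.coe_smul, smul_mul_assoc, ← ExteriorAlgebra.basis_eq_coe_basis,
      ← ExteriorAlgebra.basis_eq_coe_basis, ExteriorAlgebra.basis_mul_of_disjoint b s t
      (by simpa [t] using disjoint_compl_right), smul_comm, smul_eq_zero_iff_eq] at key
    exact b.ExteriorAlgebra.linearIndependent.smul_left_injective _ (by simpa using key)
  · intro s' _ hs'
    rw [Submodule.coe_smul, smul_mul_assoc, ← ExteriorAlgebra.basis_eq_coe_basis,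
      ← ExteriorAlgebra.basis_eq_coe_basis, ExteriorAlgebra.basis_mul_of_not_disjoint b s' t
      (mt (eq_of_disjoint s') hs'), smul_zero]
  · simp

end exteriorPower

section Wedge

variable {R M : Type*} [CommRing R] [AddCommGroup M] [Module R M]

theorem wedgeι_eq_ιMulti (n : ℕ) (v : Fin n → M) : wedgeι R n v = exteriorPower.ιMulti R n v :=
  rfl

theorem wedgeMul_smul_left_s6 (a : R) (x y : ⋀[R]^2 M) :
    wedgeMul R (a • x) y = a • wedgeMul R x y :=
  Subtype.ext (smul_mul_assoc a (x : ExteriorAlgebra R M) y)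

theorem wedgeMul_map_map (b : Basis (Fin 4) R M) (f : M →ₗ[R] M) (x y : ⋀[R]^2 M) :
    wedgeMul R (exteriorPower.map 2 f x) (exteriorPower.map 2 f y)
      = LinearMap.det f • wedgeMul R x y :=
  Subtype.ext <| by
    change (exteriorPower.map 2 f x : ExteriorAlgebra R M) * exteriorPower.map 2 f y = _
    rw [exteriorPower.coe_map, exteriorPower.coe_map, ← map_mul]
    exact ExteriorAlgebra.map_eq_det_smul_of_mem_exteriorPower b f (wedgeMul R x y).2

theorem wedgeMul_left_injective (b : Basis (Fin 4) R M) {x x' : ⋀[R]^2 M}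
    (h : ∀ y, wedgeMul R x y = wedgeMul R x' y) : x = x' :=
  sub_eq_zero.mp <| exteriorPower.eq_zero_of_forall_mul_eq_zero (n := 2) b (by simp) fun y => by
    rw [Submodule.coe_sub, sub_mul, sub_eq_zero]
    exact congr_arg Subtype.val (h y)

end Wedge

namespace IsDetForm

variable {E V : Type*} [Field E] [AddCommGroup V] [Module E V] {ρ : E →+* E} {H : V → V → E}
  {r : ℕ} {h : ⋀[E]^r V → ⋀[E]^r V → E}

theorem smul_left (hh : IsDetForm ρ H r h) (a : E) (x y : ⋀[E]^r V) :
    h (a • x) y = ρ a * h x y := by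
  simpa using hh.2.2.1 a 1 x y

theorem smul_right (hh : IsDetForm ρ H r h) (a : E) (x y : ⋀[E]^r V) :
    h x (a • y) = h x y * a := by
  simpa using hh.2.2.1 1 a x y

theorem map_map (hh : IsDetForm ρ H r h) {g : V →ₗ[E] V} {c : E}
    (hg : ∀ x y, H (g x) (g y) = c * H x y) (x y : ⋀[E]^r V) :
    h (exteriorPower.map r g x) (exteriorPower.map r g y) = c ^ r * h x y := by
  obtain ⟨add_left, add_right, -, -, apply_wedgeι⟩ := id hh
  induction x using exteriorPower.induction_on generalizing y with
  | add x x' hx hx' => rw [map_add, add_left, add_left, hx, hx', mul_add]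
  | smul a x hx => rw [map_smul, hh.smul_left, hh.smul_left, hx, mul_left_comm]
  | ιMulti v =>
    induction y using exteriorPower.induction_on with
    | add y y' hy hy' => rw [map_add, add_right, add_right, hy, hy', mul_add]
    | smul a y hy => rw [map_smul, hh.smul_right, hh.smul_right, hy, mul_assoc]
    | ιMulti w =>
      rw [exteriorPower.map_apply_ιMulti, exteriorPower.map_apply_ιMulti]
      simp only [← wedgeι_eq_ιMulti, apply_wedgeι, Function.comp_apply, hg]
      exact (Fintype.card_fin r ▸ Matrix.det_smul (Matrix.of fun i j => H (v i) (w j)) c :)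

end IsDetForm

theorem L_commutation_with_exterior_square_general
    {F E : Type*} [Field F] [Field E] [Algebra F E]
    (ρ : E →+* E)
    {V : Type*} [AddCommGroup V] [Module E V]
    (hV4 : Module.finrank E V = 4)
    (H : V → V → E)
    (d : (⋀[E]^4 V) ≃ₗ[E] E)
    (h₂ : (⋀[E]^2 V) → (⋀[E]^2 V) → E) (hh₂ : IsDetForm ρ H 2 h₂)
    (L : (⋀[E]^2 V) → (⋀[E]^2 V))
    (L_def : ∀ x y : ⋀[E]^2 V, d (wedgeMul E (L x) y) = h₂ x y)
    (g : V ≃ₗ[E] V) (ν : F)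
    (hg : ∀ x y, H (g x) (g y) = algebraMap F E ν * H x y)
    (Λg : (⋀[E]^2 V) →ₗ[E] (⋀[E]^2 V))
    (hΛg : ∀ v : Fin 2 → V, Λg (wedgeι E 2 v) = wedgeι E 2 (⇑g ∘ v)) :
    ∀ x : ⋀[E]^2 V,
      L (Λg x) = (algebraMap F E ν ^ 2 * (LinearMap.det (g : V →ₗ[E] V))⁻¹) • Λg (L x) := by
  have : Module.Finite E V := Module.finite_of_finrank_eq_succ hV4
  let b := Module.finBasisOfFinrankEq E V hV4
  obtain rfl : Λg = exteriorPower.map 2 (g : V →ₗ[E] V) := by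
    refine exteriorPower.linearMap_ext (AlternatingMap.ext fun v => ?_)
    simp only [LinearMap.compAlternatingMap_apply, exteriorPower.map_apply_ιMulti]
    exact hΛg v
  intro x
  refine wedgeMul_left_injective b fun y => ?_
  obtain ⟨y, rfl⟩ := exteriorPower.map_surjective g.surjective y
  apply d.injective
  have hdet : LinearMap.det (g : V →ₗ[E] V) ≠ 0 := g.isUnit_det'.ne_zero
  rw [L_def, hh₂.map_map hg, wedgeMul_smul_left_s6, wedgeMul_map_map b, map_smul, map_smul, L_def,
    smul_eq_mul, smul_eq_mul]
  field_simp

/-- For every `g ∈ GU(V,H)` with similitude factor `ν`, the semilinear map `L`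
satisfies `L ∘ ⋀²g = (ν² · (det g)⁻¹) · (⋀²g ∘ L)` on `⋀²V`. -/
theorem L_commutation_with_exterior_square
    {F E : Type*} [Field F] [CharZero F] [Field E] [Algebra F E]
    (hquad : Module.finrank F E = 2)
    (ρ : E →+* E) (hρ_invol : ∀ a, ρ (ρ a) = a) (hρ_ne : ρ ≠ RingHom.id E)
    (hρ_fixF : ∀ c : F, ρ (algebraMap F E c) = algebraMap F E c)
    (hρ_fixed_field : ∀ a : E, ρ a = a → ∃ c : F, algebraMap F E c = a)
    {V : Type*} [AddCommGroup V] [Module E V] [FiniteDimensional E V]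
    (hV4 : Module.finrank E V = 4)
    (H : V → V → E)
    (H_add_left : ∀ x y z, H (x + y) z = H x z + H y z)
    (H_add_right : ∀ x y z, H x (y + z) = H x y + H x z)
    (H_smul : ∀ (a b : E) (x y : V), H (a • x) (b • y) = ρ a * H x y * b)
    (H_conj : ∀ x y, H x y = ρ (H y x))
    (H_nondeg : ∀ x, (∀ y, H x y = 0) → x = 0)
    (d : (⋀[E]^4 V) ≃ₗ[E] E)
    (h₂ : (⋀[E]^2 V) → (⋀[E]^2 V) → E) (hh₂ : IsDetForm ρ H 2 h₂)
    (L : (⋀[E]^2 V) → (⋀[E]^2 V))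
    (L_add : ∀ x y, L (x + y) = L x + L y)
    (L_smul : ∀ (a : E) (x : ⋀[E]^2 V), L (a • x) = ρ a • L x)
    (L_def : ∀ x y : ⋀[E]^2 V, d (wedgeMul E (L x) y) = h₂ x y)
    (g : V ≃ₗ[E] V) (ν : F) (hν : ν ≠ 0)
    (hg : ∀ x y, H (g x) (g y) = algebraMap F E ν * H x y)
    (Λg : (⋀[E]^2 V) →ₗ[E] (⋀[E]^2 V))
    (hΛg : ∀ v : Fin 2 → V, Λg (wedgeι E 2 v) = wedgeι E 2 (⇑g ∘ v)) :
    ∀ x : ⋀[E]^2 V,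
      L (Λg x) = (algebraMap F E ν ^ 2 * (LinearMap.det (g : V →ₗ[E] V))⁻¹) • Λg (L x) :=
  L_commutation_with_exterior_square_general ρ hV4 H d h₂ hh₂ L L_def g ν hg Λg hΛg
end
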